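/- For every q > 0, every integer n ≥ 2, every integer m ≥ 0 and every x ∈ [0,1], the recurrence R_{n,q}(t^{m+1},x) = R_{n,q}(t^m,x) − (1−x) · ([n−1]_q/[n]_q)^m · R_{n−1,q}(t^m, v(q,x)) holds, where t^m denotes the monomial function t ↦ t^m on [0,1]. -/

import Mathlib

/-!
With `v = v(q,x)`, clearing the denominators of `b_{n-1,k}(q;v)` gives
`(1 - x) b_{n-1,k}(q;v) = q^k [n-k]_q/[n]_q · b_{n,k}(q;x) = (1 - [k]_q/[n]_q) b_{n,k}(q;x)`,
the last step because `[k]_q + q^k [n-k]_q = [n]_q`. Since `[n-1]_q/[n]_q · [k]_q/[n-1]_q = [k]_q/[n]_q`,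
summing over `k` gives `(1 - x) R_{n-1,q}(f([n-1]_q/[n]_q · s), v) = R_{n,q}((1 - t) f(t), x)`
for every `f`. For `f = t^m` the left side is `([n-1]_q/[n]_q)^m (1 - x) R_{n-1,q}(t^m, v)` and the
right side is `R_{n,q}(t^m, x) - R_{n,q}(t^{m+1}, x)`.
-/

open Finset Filter

noncomputable section

/-- The q-integer `[n]_q = 1 + q + ⋯ + q^(n-1)`. -/
def qInt (q : ℝ) (n : ℕ) : ℝ := ∑ i ∈ Finset.range n, q ^ i

/-- The q-factorial `[n]_q!`. -/
def qFact (q : ℝ) : ℕ → ℝ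
  | 0 => 1
  | n + 1 => qFact q n * qInt q (n + 1)

/-- The q-binomial coefficient `[n k]_q`. -/
def qBinom (q : ℝ) (n k : ℕ) : ℝ := qFact q n / (qFact q k * qFact q (n - k))

/-- The Lupaş basis function `b_{nk}(q;x)`. -/
def lupasB (q : ℝ) (n k : ℕ) (x : ℝ) : ℝ :=
  qBinom q n k * q ^ (k * (k - 1) / 2) * x ^ k * (1 - x) ^ (n - k) /
    ∏ j ∈ Finset.range (n - 1), (1 - x + q ^ (j + 1) * x)

/-- The limit Lupaş basis function `b_{∞k}(q;x)` (for `0 < q < 1`, `x ∈ [0,1)`). -/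
def lupasBInf (q : ℝ) (k : ℕ) (x : ℝ) : ℝ :=
  q ^ (k * (k - 1) / 2) * (x / (1 - x)) ^ k /
    ((1 - q) ^ k * qFact q k * ∏' j : ℕ, (1 + q ^ j * (x / (1 - x))))

/-- The Lupaş q-analogue of the Bernstein operator `R_{n,q}(f,x)`. -/
def lupasR (q : ℝ) (n : ℕ) (f : ℝ → ℝ) (x : ℝ) : ℝ :=
  ∑ k ∈ Finset.range (n + 1), f (qInt q k / qInt q n) * lupasB q n k x

/-- The limit q-Lupaş operator `R_{∞,q}(f,x)` for `0 < q < 1`. -/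
def lupasRInfLow (q : ℝ) (f : ℝ → ℝ) (x : ℝ) : ℝ :=
  if x = 1 then f 1 else ∑' k : ℕ, f (1 - q ^ k) * lupasBInf q k x

/-- The limit q-Lupaş operator `R_{∞,q}(f,x)`: for `q > 1` it is defined by
reflection, `R_{∞,q}(f,x) = R_{∞,1/q}(g,1-x)` with `g(x) = f(1-x)`. -/
def lupasRInf (q : ℝ) (f : ℝ → ℝ) (x : ℝ) : ℝ :=
  if 1 < q then lupasRInfLow (1 / q) (fun t => f (1 - t)) (1 - x)
  else lupasRInfLow q f x

/-- The transform `v(q,x) = qx/(1-x+qx)`. -/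
def vq (q x : ℝ) : ℝ := q * x / (1 - x + q * x)

/-- `L_{n,q}(f,x) = R_{n,q}(f,x) - R_{∞,q}(f,x)`. -/
def lupasL (q : ℝ) (n : ℕ) (f : ℝ → ℝ) (x : ℝ) : ℝ :=
  lupasR q n f x - lupasRInf q f x

/-- The modulus of continuity `ω(f,t)` of `f` on `[0,1]`. -/
def omega1 (f : ℝ → ℝ) (t : ℝ) : ℝ :=
  sSup {d | ∃ x ∈ Set.Icc (0:ℝ) 1, ∃ y ∈ Set.Icc (0:ℝ) 1, |x - y| ≤ t ∧ d = |f x - f y|}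

/-- The second modulus of smoothness `ω₂(f,t)` of `f` on `[0,1]`. -/
def omega2 (f : ℝ → ℝ) (t : ℝ) : ℝ :=
  sSup {d | ∃ h, 0 ≤ h ∧ h ≤ t ∧ ∃ x, 0 ≤ x ∧ x ≤ 1 - 2 * h ∧
    d = |f (x + 2 * h) - 2 * f (x + h) + f x|}

lemma qInt_pos {q : ℝ} (hq : 0 < q) {n : ℕ} (hn : 0 < n) : 0 < qInt q n :=
  Finset.sum_pos (fun i _ => pow_pos hq i) (Finset.nonempty_range_iff.mpr (by omega))

lemma qFact_pos {q : ℝ} (hq : 0 < q) (n : ℕ) : 0 < qFact q n := by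
  induction n with
  | zero => norm_num [qFact]
  | succ k ih => exact mul_pos ih (qInt_pos hq k.succ_pos)

lemma qInt_add (q : ℝ) (a b : ℕ) : qInt q (a + b) = qInt q a + q ^ a * qInt q b := by
  simp only [qInt, Finset.sum_range_add, Finset.mul_sum, pow_add]

lemma one_sub_qInt_div_qInt {q : ℝ} (hq : 0 < q) {n k : ℕ} (hn : 0 < n) (hk : k ≤ n) :
    1 - qInt q k / qInt q n = q ^ k * qInt q (n - k) / qInt q n := by
  have hn' := (qInt_pos hq hn).ne'
  rw [eq_div_iff hn', sub_mul, div_mul_cancel₀ _ hn', one_mul, sub_eq_iff_eq_add',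
    ← qInt_add, Nat.add_sub_cancel' hk]

lemma qBinom_succ_mul_qInt {q : ℝ} (hq : 0 < q) {n k : ℕ} (hk : k ≤ n) :
    qBinom q (n + 1) k * qInt q (n + 1 - k) = qBinom q n k * qInt q (n + 1) := by
  have hfact : qFact q (n + 1 - k) = qFact q (n - k) * qInt q (n + 1 - k) := by
    rw [show n + 1 - k = n - k + 1 by omega]; rfl
  have := (qInt_pos hq (show 0 < n + 1 - k by omega)).ne'
  have := (qFact_pos hq k).ne'
  have := (qFact_pos hq (n - k)).ne'
  rw [qBinom, qBinom, qFact, hfact]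
  field_simp

lemma one_sub_add_pow_mul_pos {q x : ℝ} (hq : 0 < q) (hx : x ∈ Set.Icc (0:ℝ) 1) (j : ℕ) :
    0 < 1 - x + q ^ j * x := by
  obtain ⟨h0, h1⟩ := hx
  rcases h0.eq_or_lt with rfl | h
  · simp
  · nlinarith [pow_pos hq j]

-- Substituting `v = q x / (1 - x + q x)` maps the `j`-th denominator factor to the
-- `(j + 1)`-st one, up to the common factor `1 - x + q x`.
lemma lupasB_vq {q x : ℝ} (hq : 0 < q) (hx : x ∈ Set.Icc (0:ℝ) 1) {n k : ℕ} (hk : k ≤ n + 1) :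
    lupasB q (n + 1) k (vq q x) =
      qBinom q (n + 1) k * q ^ (k * (k - 1) / 2) * (q * x) ^ k * (1 - x) ^ (n + 1 - k) /
        ∏ j ∈ Finset.range (n + 1), (1 - x + q ^ (j + 1) * x) := by
  set s := 1 - x + q * x
  have hs : 0 < s := by simpa using one_sub_add_pow_mul_pos hq hx 1
  have hv : vq q x = q * x / s := rfl
  have hfactor (j : ℕ) : (1 - vq q x + q ^ (j + 1) * vq q x) * s = 1 - x + q ^ (j + 2) * x := by
    rw [hv]; field_simp; ring
  have hprod_v : (∏ j ∈ Finset.range n, (1 - vq q x + q ^ (j + 1) * vq q x)) * s ^ n =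
      ∏ j ∈ Finset.range n, (1 - x + q ^ (j + 2) * x) := by
    rw [← Finset.card_range n, ← Finset.prod_const, Finset.card_range, ← Finset.prod_mul_distrib]
    exact Finset.prod_congr rfl fun j _ => hfactor j
  have hprod_x : ∏ j ∈ Finset.range (n + 1), (1 - x + q ^ (j + 1) * x) =
      (∏ j ∈ Finset.range n, (1 - x + q ^ (j + 2) * x)) * s := by
    rw [Finset.prod_range_succ', pow_one]
  have hone_sub_v : 1 - vq q x = (1 - x) / s := by
    rw [hv]; field_simp; ring
  have hpow : s ^ k * s ^ (n + 1 - k) = s ^ n * s := by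
    rw [← pow_add, ← pow_succ, Nat.add_sub_cancel' hk]
  have hP : 0 < ∏ j ∈ Finset.range n, (1 - x + q ^ (j + 2) * x) :=
    Finset.prod_pos fun j _ => one_sub_add_pow_mul_pos hq hx (j + 2)
  rw [lupasB, Nat.add_sub_cancel, hprod_x, ← hprod_v]
  rw [← hprod_v] at hP
  generalize ∏ j ∈ Finset.range n, (1 - vq q x + q ^ (j + 1) * vq q x) = D at hP ⊢
  have hD : D ≠ 0 := by rintro rfl; simp at hP
  rw [hone_sub_v, hv, div_pow, div_pow]
  field_simp
  linear_combination -(qBinom q (n + 1) k * (q * x) ^ k * (1 - x) ^ (n + 1 - k)) * hpow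

lemma one_sub_mul_lupasB_vq {q x : ℝ} (hq : 0 < q) (hx : x ∈ Set.Icc (0:ℝ) 1) {n k : ℕ}
    (hk : k ≤ n + 1) :
    (1 - x) * lupasB q (n + 1) k (vq q x) =
      (1 - qInt q k / qInt q (n + 2)) * lupasB q (n + 2) k x := by
  have hqBinom : qBinom q (n + 1) k =
      qBinom q (n + 2) k * qInt q (n + 2 - k) / qInt q (n + 2) := by
    rw [qBinom_succ_mul_qInt hq hk, mul_div_cancel_right₀ _ (qInt_pos hq (by omega)).ne']
  have hpow : (1 - x) * (1 - x) ^ (n + 1 - k) = (1 - x) ^ (n + 2 - k) := by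
    rw [← pow_succ', show n + 2 - k = n + 1 - k + 1 by omega]
  rw [lupasB_vq hq hx hk, one_sub_qInt_div_qInt hq (by omega) (by omega), lupasB,
    show n + 2 - 1 = n + 1 from rfl, hqBinom, ← hpow]
  ring

lemma lupasR_const_mul (q : ℝ) (n : ℕ) (c : ℝ) (f : ℝ → ℝ) (x : ℝ) :
    lupasR q n (fun t => c * f t) x = c * lupasR q n f x := by
  simp only [lupasR, Finset.mul_sum, mul_assoc]

lemma lupasR_sub (q : ℝ) (n : ℕ) (f g : ℝ → ℝ) (x : ℝ) :
    lupasR q n (fun t => f t - g t) x = lupasR q n f x - lupasR q n g x := by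
  simp only [lupasR, sub_mul, Finset.sum_sub_distrib]

theorem one_sub_mul_lupasR_vq {q x : ℝ} (hq : 0 < q) (hx : x ∈ Set.Icc (0:ℝ) 1) (n : ℕ)
    (f : ℝ → ℝ) :
    (1 - x) * lupasR q (n + 1) (fun s => f (qInt q (n + 1) / qInt q (n + 2) * s)) (vq q x) =
      lupasR q (n + 2) (fun t => (1 - t) * f t) x := by
  have hn : qInt q (n + 1) ≠ 0 := (qInt_pos hq n.succ_pos).ne'
  have hnode (k : ℕ) : qInt q (n + 1) / qInt q (n + 2) * (qInt q k / qInt q (n + 1)) =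
      qInt q k / qInt q (n + 2) := by
    field_simp
  rw [lupasR, lupasR, Finset.sum_range_succ _ (n + 2),
    div_self (qInt_pos hq (by omega)).ne', sub_self, zero_mul, zero_mul, add_zero, Finset.mul_sum]
  refine Finset.sum_congr rfl fun k hk => ?_
  rw [hnode, mul_left_comm, one_sub_mul_lupasB_vq hq hx (Finset.mem_range_succ_iff.mp hk)]
  ring

theorem lupasR_recurrence (q : ℝ) (hq : 0 < q) (n : ℕ) (hn : 2 ≤ n) (m : ℕ)
    (x : ℝ) (hx : x ∈ Set.Icc (0:ℝ) 1) :
    lupasR q n (fun t => t ^ (m + 1)) x =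
      lupasR q n (fun t => t ^ m) x -
        (1 - x) * (qInt q (n - 1) / qInt q n) ^ m *
          lupasR q (n - 1) (fun t => t ^ m) (vq q x) := by
  obtain ⟨n, rfl⟩ : ∃ k, n = k + 2 := ⟨n - 2, by omega⟩
  have h := one_sub_mul_lupasR_vq hq hx n (fun t => t ^ m)
  have hmonomial : (fun t : ℝ => (1 - t) * t ^ m) = fun t => t ^ m - t ^ (m + 1) := by
    ext t; ring
  simp only [mul_pow, lupasR_const_mul, hmonomial, lupasR_sub] at h
  rw [show n + 2 - 1 = n + 1 from rfl]
  linarith
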